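/- arXiv:2510.27368 — 4 statements merged into one kernel-verified Lean document; each statement's English description precedes it below -/
import Mathlib

section
/- The quasimetric space (Δ_N, D_f) is unitopological and its topology is the standard Euclidean topology: for any P ∈ Δ_N and any sequence (P_n) in Δ_N, the following are equivalent: (i) P_n → P in the Euclidean metric; (ii) D_f(P, P_n) → 0; (iii) D_f(P_n, P) → 0. -/
/-!
On the simplex, `D_f` is continuous in each argument (a finite maximum of continuous functions),
and `D_f(P, Q) = 0` forces `P = Q`: it gives `f(q_i) ≤ f(p_i)`, hence `q_i ≤ p_i`, for every `i`,
and both vectors have total mass one. On the compact simplex, a continuous function whose only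
zero is `P` tends to `0` along a sequence exactly when the sequence tends to `P`; applied to
`Q ↦ D_f(P, Q)` and `Q ↦ D_f(Q, P)` this gives both equivalences with coordinatewise convergence,
which is Euclidean convergence.
-/

open Filter Topology

/-- Membership in the probability simplex Δ_N ⊂ ℝ^{N+1}. -/
def memSimplex {N : ℕ} (P : Fin (N + 1) → ℝ) : Prop :=
  (∀ i, P i ∈ Set.Icc (0 : ℝ) 1) ∧ ∑ i, P i = 1

/-- The max-type quasimetric D_f(P,Q) = max_i (f(q_i) - f(p_i)). -/
noncomputable def Df {N : ℕ} (f : ℝ → ℝ) (P Q : Fin (N + 1) → ℝ) : ℝ :=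
  ⨆ i, (f (Q i) - f (P i))

/-- The Euclidean distance on ℝ^{N+1}. -/
noncomputable def dE {N : ℕ} (P Q : Fin (N + 1) → ℝ) : ℝ :=
  Real.sqrt (∑ i, (Q i - P i) ^ 2)

theorem IsCompact.tendsto_nhds_iff_tendsto_comp {X Y : Type*} [TopologicalSpace X]
    [FirstCountableTopology X] [TopologicalSpace Y] [T2Space Y] {s : Set X} (hs : IsCompact s)
    {g : X → Y} (hg : ContinuousOn g s) {a : X} (ha : a ∈ s) (hga : ∀ y ∈ s, g y = g a → y = a)
    {x : ℕ → X} (hx : ∀ n, x n ∈ s) :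
    Tendsto x atTop (𝓝 a) ↔ Tendsto (g ∘ x) atTop (𝓝 (g a)) := by
  have hcomp : ∀ {y : X}, y ∈ s → ∀ {φ : ℕ → ℕ}, Tendsto (x ∘ φ) atTop (𝓝 y) →
      Tendsto (g ∘ x ∘ φ) atTop (𝓝 (g y)) := fun hy _ hφ =>
    (hg _ hy).tendsto.comp (tendsto_nhdsWithin_iff.2 ⟨hφ, .of_forall fun n => hx _⟩)
  refine ⟨fun h => hcomp (φ := id) ha h, fun h => tendsto_of_subseq_tendsto fun ns hns => ?_⟩
  obtain ⟨y, hys, φ, hφ, hy⟩ := hs.tendsto_subseq fun n => hx (ns n)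
  have hgy : g y = g a :=
    tendsto_nhds_unique (hcomp (φ := ns ∘ φ) hys hy) (h.comp (hns.comp hφ.tendsto_atTop))
  exact ⟨φ, hga y hys hgy ▸ hy⟩

section Simplex

variable {N : ℕ}

theorem setOf_memSimplex_eq :
    {P : Fin (N + 1) → ℝ | memSimplex P} = Set.Icc 0 1 ∩ {P | ∑ i, P i = 1} := by
  ext P
  simp [memSimplex, Pi.le_def, forall_and]

theorem isCompact_setOf_memSimplex : IsCompact {P : Fin (N + 1) → ℝ | memSimplex P} := by
  rw [setOf_memSimplex_eq]
  exact isCompact_Icc.inter_right <|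
    isClosed_eq (continuous_finsetSum _ fun i _ => continuous_apply i) continuous_const

theorem dE_eq_dist (P Q : Fin (N + 1) → ℝ) :
    dE P Q = dist (WithLp.toLp 2 Q : EuclideanSpace ℝ (Fin (N + 1))) (WithLp.toLp 2 P) := by
  simp [dE, EuclideanSpace.dist_eq, Real.dist_eq, sq_abs]

theorem tendsto_dE_zero_iff {ι : Type*} {l : Filter ι} {P : Fin (N + 1) → ℝ}
    {Pn : ι → Fin (N + 1) → ℝ} :
    Tendsto (fun n => dE P (Pn n)) l (𝓝 0) ↔ Tendsto Pn l (𝓝 P) := by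
  simp_rw [dE_eq_dist, ← tendsto_iff_dist_tendsto_zero]
  exact ((PiLp.homeomorph 2 _).symm.isInducing.tendsto_nhds_iff).symm

theorem Df_eq_sup' (f : ℝ → ℝ) (P Q : Fin (N + 1) → ℝ) :
    Df f P Q = Finset.univ.sup' Finset.univ_nonempty fun i => f (Q i) - f (P i) :=
  (Finset.sup'_univ_eq_ciSup _).symm

theorem Df_self (f : ℝ → ℝ) (P : Fin (N + 1) → ℝ) : Df f P P = 0 := by
  simp [Df]

theorem Df_eq_zero_iff {f : ℝ → ℝ} (hfm : StrictMonoOn f (Set.Icc 0 1))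
    {P Q : Fin (N + 1) → ℝ} (hP : memSimplex P) (hQ : memSimplex Q) : Df f P Q = 0 ↔ P = Q := by
  refine ⟨fun h => ?_, fun h => h ▸ Df_self f P⟩
  have hle : ∀ i ∈ Finset.univ, Q i ≤ P i := fun i _ =>
    (hfm.le_iff_le (hQ.1 i) (hP.1 i)).1 <| sub_nonpos.1 <| h ▸
      le_ciSup (f := fun i => f (Q i) - f (P i)) (Set.finite_range _).bddAbove i
  have hsum : ∑ i, Q i = ∑ i, P i := by rw [hQ.2, hP.2]
  exact funext fun i => ((Finset.sum_eq_sum_iff_of_le hle).1 hsum i (Finset.mem_univ i)).symm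

theorem ContinuousOn.Df {X : Type*} [TopologicalSpace X] {s : Set X} {u v : X → Fin (N + 1) → ℝ}
    (hu : ContinuousOn u s) (hv : ContinuousOn v s) {f : ℝ → ℝ} (hfc : ContinuousOn f (Set.Icc 0 1))
    (hus : ∀ x ∈ s, ∀ i, u x i ∈ Set.Icc 0 1) (hvs : ∀ x ∈ s, ∀ i, v x i ∈ Set.Icc 0 1) :
    ContinuousOn (fun x => Df f (u x) (v x)) s := by
  simp_rw [Df_eq_sup']
  refine ContinuousOn.finset_sup'_apply _ fun i _ => ContinuousOn.sub ?_ ?_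
  · exact hfc.comp ((continuous_apply i).comp_continuousOn hv) fun x hx => hvs x hx i
  · exact hfc.comp ((continuous_apply i).comp_continuousOn hu) fun x hx => hus x hx i

end Simplex

theorem stmt_2_general {N : ℕ} (f : ℝ → ℝ)
    (hfc : ContinuousOn f (Set.Icc 0 1))
    (hfm : StrictMonoOn f (Set.Icc 0 1))
    (P : Fin (N + 1) → ℝ) (hP : memSimplex P)
    (Pn : ℕ → Fin (N + 1) → ℝ) (hPn : ∀ n, memSimplex (Pn n)) :
    (Tendsto (fun n => dE P (Pn n)) atTop (𝓝 0) ↔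
      Tendsto (fun n => Df f P (Pn n)) atTop (𝓝 0)) ∧
    (Tendsto (fun n => Df f P (Pn n)) atTop (𝓝 0) ↔
      Tendsto (fun n => Df f (Pn n) P) atTop (𝓝 0)) := by
  have hS := isCompact_setOf_memSimplex (N := N)
  have hsimplex : ∀ Q ∈ {Q : Fin (N + 1) → ℝ | memSimplex Q}, ∀ i, Q i ∈ Set.Icc 0 1 :=
    fun Q hQ => hQ.1
  have hforward : Tendsto Pn atTop (𝓝 P) ↔ Tendsto (fun n => Df f P (Pn n)) atTop (𝓝 0) := by
    rw [← Df_self f P]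
    exact hS.tendsto_nhds_iff_tendsto_comp
      (continuousOn_const.Df continuousOn_id hfc (fun _ _ => hP.1) hsimplex) hP
      (fun Q hQ h => ((Df_eq_zero_iff hfm hP hQ).1 (h.trans (Df_self f P))).symm) hPn
  have hbackward : Tendsto Pn atTop (𝓝 P) ↔ Tendsto (fun n => Df f (Pn n) P) atTop (𝓝 0) := by
    rw [← Df_self f P]
    exact hS.tendsto_nhds_iff_tendsto_comp
      (continuousOn_id.Df continuousOn_const hfc hsimplex fun _ _ => hP.1) hP
      (fun Q hQ h => (Df_eq_zero_iff hfm hQ hP).1 (h.trans (Df_self f P))) hPn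
  exact ⟨tendsto_dE_zero_iff.trans hforward, hforward.symm.trans hbackward⟩

/-- (Δ_N, D_f) is unitopological, with the Euclidean topology:
Euclidean convergence, forward convergence and backward convergence of sequences
in the simplex are all equivalent. -/
theorem stmt_2 {N : ℕ} (f : ℝ → ℝ)
    (hfc : ContinuousOn f (Set.Icc 0 1))
    (hfm : StrictMonoOn f (Set.Icc 0 1))
    (hf0 : f 0 = 0) (hf1 : f 1 = 1)
    (P : Fin (N + 1) → ℝ) (hP : memSimplex P)
    (Pn : ℕ → Fin (N + 1) → ℝ) (hPn : ∀ n, memSimplex (Pn n)) :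
    (Tendsto (fun n => dE P (Pn n)) atTop (𝓝 0) ↔
      Tendsto (fun n => Df f P (Pn n)) atTop (𝓝 0)) ∧
    (Tendsto (fun n => Df f P (Pn n)) atTop (𝓝 0) ↔
      Tendsto (fun n => Df f (Pn n) P) atTop (𝓝 0)) :=
  stmt_2_general f hfc hfm P hP Pn hPn
end

section
/- Quasimetric derivative of D_f (Busemann–Mayer formula instance): let f be continuously differentiable on (0,1), and let γ : [0,b] → Δ°_N be a C¹ curve with γ(0) = P ∈ Δ°_N. Then lim_{t → 0⁺} D_f(γ(0),γ(t))/t = max_i f'(p_i)·γ_i'(0). -/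
open Filter Topology

/-- Membership in the interior Δ°_N of the probability simplex. -/
def memInteriorSimplex {N : ℕ} (P : Fin (N + 1) → ℝ) : Prop :=
  (∀ i, P i ∈ Set.Ioo (0 : ℝ) 1) ∧ ∑ i, P i = 1

/-! Each coordinate `t ↦ f (γ t i)` has right derivative `f' (p_i) γ_i'(0)` at `0` by the chain
rule, and a maximum of finitely many functions converges to the maximum of their limits; dividing
`D_f(γ 0, γ t)` by `t > 0` commutes with the maximum. -/

lemma Filter.Tendsto.ciSup_nhds {ι α L : Type*} [Finite ι] [Nonempty ι]
    [ConditionallyCompleteLattice L] [TopologicalSpace L] [ContinuousSup L]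
    {l : Filter α} {F : ι → α → L} {g : ι → L} (hF : ∀ i, Tendsto (F i) l (𝓝 (g i))) :
    Tendsto (fun a ↦ ⨆ i, F i a) l (𝓝 (⨆ i, g i)) := by
  have := Fintype.ofFinite ι
  simp only [← Finset.sup'_univ_eq_ciSup]
  exact Tendsto.finset_sup'_nhds_apply Finset.univ_nonempty fun i _ ↦ hF i

lemma HasDerivWithinAt.tendsto_slope_nhdsGT_of_Icc {E : Type*} [NormedAddCommGroup E]
    [NormedSpace ℝ E] {g : ℝ → E} {g' : E} {a b : ℝ} (hab : a < b)
    (h : HasDerivWithinAt g g' (Set.Icc a b) a) :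
    Tendsto (slope g a) (𝓝[>] a) (𝓝 g') :=
  (hasDerivWithinAt_iff_tendsto_slope' Set.self_notMem_Ioi).1
    (h.mono_of_mem_nhdsWithin (Icc_mem_nhdsGT hab))

lemma Df_div_of_nonneg {N : ℕ} (f : ℝ → ℝ) (P Q : Fin (N + 1) → ℝ) {t : ℝ} (ht : 0 ≤ t) :
    Df f P Q / t = ⨆ i, (f (Q i) - f (P i)) / t := by
  simp only [Df, div_eq_mul_inv]
  exact Real.iSup_mul_of_nonneg (inv_nonneg.2 ht) _

theorem stmt_12_general {N : ℕ} (f f' : ℝ → ℝ)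
    (hderiv : ∀ x ∈ Set.Ioo (0 : ℝ) 1, HasDerivAt f (f' x) x)
    (b : ℝ) (hb : 0 < b)
    (γ γ' : ℝ → Fin (N + 1) → ℝ)
    (hγmem : ∀ t ∈ Set.Icc 0 b, memInteriorSimplex (γ t))
    (hγderiv : ∀ t ∈ Set.Icc 0 b, HasDerivWithinAt γ (γ' t) (Set.Icc 0 b) t)
    (P : Fin (N + 1) → ℝ) (hP : γ 0 = P) :
    Tendsto (fun t => Df f (γ 0) (γ t) / t) (𝓝[>] 0)
      (𝓝 (⨆ i, f' (P i) * γ' 0 i)) := by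
  subst hP
  have h0 : (0 : ℝ) ∈ Set.Icc 0 b := ⟨le_rfl, hb.le⟩
  have hcoord : ∀ i, Tendsto (fun t ↦ (f (γ t i) - f (γ 0 i)) / t) (𝓝[>] 0)
      (𝓝 (f' (γ 0 i) * γ' 0 i)) := fun i ↦ by
    have hchain := (hderiv _ ((hγmem 0 h0).1 i)).comp_hasDerivWithinAt 0
      (hasDerivWithinAt_pi.1 (hγderiv 0 h0) i)
    refine (hchain.tendsto_slope_nhdsGT_of_Icc hb).congr fun t ↦ ?_
    simp [slope_def_field]
  refine (Tendsto.ciSup_nhds hcoord).congr' ?_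
  filter_upwards [self_mem_nhdsWithin] with t ht
  exact (Df_div_of_nonneg f _ _ (le_of_lt ht)).symm

/-- quasimetric derivative of D_f (Busemann–Mayer formula): if f is
C¹ on (0,1) (with derivative f') and γ : [0,b] → Δ°_N is a C¹ curve (with
derivative γ') starting at P = γ(0), then
lim_{t→0⁺} D_f(γ(0),γ(t))/t = max_i f'(p_i)·γ_i'(0). -/
theorem stmt_12 {N : ℕ} (f f' : ℝ → ℝ)
    (hfc : ContinuousOn f (Set.Icc 0 1))
    (hfm : StrictMonoOn f (Set.Icc 0 1))
    (hf0 : f 0 = 0) (hf1 : f 1 = 1)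
    (hderiv : ∀ x ∈ Set.Ioo (0 : ℝ) 1, HasDerivAt f (f' x) x)
    (hf'cont : ContinuousOn f' (Set.Ioo 0 1))
    (b : ℝ) (hb : 0 < b)
    (γ γ' : ℝ → Fin (N + 1) → ℝ)
    (hγmem : ∀ t ∈ Set.Icc 0 b, memInteriorSimplex (γ t))
    (hγderiv : ∀ t ∈ Set.Icc 0 b, HasDerivWithinAt γ (γ' t) (Set.Icc 0 b) t)
    (hγ'cont : ContinuousOn γ' (Set.Icc 0 b))
    (P : Fin (N + 1) → ℝ) (hP : γ 0 = P) :
    Tendsto (fun t => Df f (γ 0) (γ t) / t) (𝓝[>] 0)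
      (𝓝 (⨆ i, f' (P i) * γ' 0 i)) :=
  stmt_12_general f f' hderiv b hb γ γ' hγmem hγderiv P hP
end

section
/- Forward length equals Finsler length: let f be continuously differentiable on (0,1) and γ : [a,b] → Δ°_N a C¹ curve into the interior of the simplex. Then L⁺(γ) = ∫_a^b max_i f'(γ_i(τ))·γ_i'(τ) dτ, where L⁺ is the forward length associated with the quasimetric D_f. -/
open scoped ENNReal

/-- The forward length of the curve γ : [a,b] → X with respect to D:
the supremum over all partitions a = t₀ < t₁ < … < tₙ = b of
∑ D(γ(t_{i-1}), γ(t_i)). -/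
noncomputable def forwardLength {X : Type*} (D : X → X → ℝ) (a b : ℝ) (γ : ℝ → X) : ℝ≥0∞ :=
  sSup { L : ℝ≥0∞ | ∃ (n : ℕ) (t : Fin (n + 1) → ℝ), StrictMono t ∧
    t 0 = a ∧ t (Fin.last n) = b ∧
    L = ∑ j : Fin n, ENNReal.ofReal (D (γ (t j.castSucc)) (γ (t j.succ))) }

/-! By the fundamental theorem of calculus, `D_f(γ s, γ u) = max_i ∫_s^u F_i` with
`F_i = f'(γ_i) γ_i'`, so every partition sum is at most `∫_a^b max_i F_i`. Conversely, by uniform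
continuity of `F` an index maximising `F(s)` stays `ε`-close to the maximum on a short piece
`[s, u]`, so sufficiently fine partitions reach `∫_a^b max_i F_i` up to `ε (b - a)`. Along the
curve `D_f ≥ 0`, since the coordinates of a point of the simplex cannot all decrease; this lets the
partition sums pass between `ℝ` and `ℝ≥0∞`. -/

open Set MeasureTheory intervalIntegral

section Partition

variable {g : ℝ → ℝ}

theorem sum_integral_partition {n : ℕ} (t : Fin (n + 1) → ℝ)
    (hg : ∀ i j, IntervalIntegrable g volume (t i) (t j)) :
    ∑ j : Fin n, ∫ τ in t j.castSucc..t j.succ, g τ = ∫ τ in t 0..t (Fin.last n), g τ := by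
  induction n with
  | zero => simp
  | succ n ih =>
    have hpieces := ih (fun j => t j.castSucc) fun _ _ => hg _ _
    rw [Fin.sum_univ_castSucc]
    simp only [Fin.castSucc_zero, Fin.succ_castSucc] at hpieces ⊢
    rw [hpieces, ← Fin.succ_last]
    exact integral_add_adjacent_intervals (hg _ _) (hg _ _)

theorem IntervalIntegrable.partition {a b : ℝ} (hg : IntervalIntegrable g volume a b)
    {n : ℕ} {t : Fin (n + 1) → ℝ} (ht : Monotone t) (ha : t 0 = a) (hb : t (Fin.last n) = b)
    (i j : Fin (n + 1)) : IntervalIntegrable g volume (t i) (t j) := by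
  subst ha hb
  refine hg.mono_set (uIcc_subset_uIcc ?_ ?_) <;>
    exact Icc_subset_uIcc ⟨ht (Fin.zero_le _), ht (Fin.le_last _)⟩

theorem exists_strictMono_partition_sub_le {a b δ : ℝ} (hab : a < b) (hδ : 0 < δ) :
    ∃ (n : ℕ) (t : Fin (n + 1) → ℝ), StrictMono t ∧ t 0 = a ∧ t (Fin.last n) = b ∧
      ∀ j : Fin n, t j.succ - t j.castSucc ≤ δ := by
  obtain ⟨n, hn⟩ := exists_nat_gt ((b - a) / δ)
  have hn0 : (0 : ℝ) < n := (div_pos (sub_pos.2 hab) hδ).trans hn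
  have hstep : 0 < (b - a) / n := div_pos (sub_pos.2 hab) hn0
  refine ⟨n, fun j => a + j * ((b - a) / n), fun i j hij => ?_, by simp, ?_, fun j => ?_⟩
  · have : (i : ℝ) < j := by exact_mod_cast hij
    simpa using mul_lt_mul_of_pos_right this hstep
  · simp only [Fin.val_last]
    field_simp
    ring
  · calc _ = (b - a) / n := by simp only [Fin.val_succ, Fin.val_castSucc]; push_cast; ring
      _ ≤ δ := by
        rw [div_lt_iff₀ hδ] at hn
        rw [div_le_iff₀ hn0]
        linarith

end Partition

section ForwardLength

variable {X : Type*} {D : X → X → ℝ} {γ : ℝ → X} {g : ℝ → ℝ} {a b : ℝ}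

theorem forwardLength_le_ofReal_integral (hg : IntervalIntegrable g volume a b)
    (hD₀ : ∀ s ∈ Icc a b, ∀ u ∈ Icc a b, s ≤ u → 0 ≤ D (γ s) (γ u))
    (hD : ∀ s ∈ Icc a b, ∀ u ∈ Icc a b, s ≤ u → D (γ s) (γ u) ≤ ∫ τ in s..u, g τ) :
    forwardLength D a b γ ≤ ENNReal.ofReal (∫ τ in a..b, g τ) := by
  refine sSup_le ?_
  rintro L ⟨n, t, ht, ha, hb, rfl⟩
  have hmem : ∀ j, t j ∈ Icc a b := fun j =>
    ⟨ha ▸ ht.monotone (Fin.zero_le j), hb ▸ ht.monotone (Fin.le_last j)⟩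
  have hle : ∀ j : Fin n, t j.castSucc ≤ t j.succ := fun j => (ht j.castSucc_lt_succ).le
  rw [← ENNReal.ofReal_sum_of_nonneg fun j _ => hD₀ _ (hmem _) _ (hmem _) (hle j)]
  refine ENNReal.ofReal_le_ofReal ?_
  calc ∑ j : Fin n, D (γ (t j.castSucc)) (γ (t j.succ))
      ≤ ∑ j : Fin n, ∫ τ in t j.castSucc..t j.succ, g τ :=
        Finset.sum_le_sum fun j _ => hD _ (hmem _) _ (hmem _) (hle j)
    _ = ∫ τ in a..b, g τ := by
        rw [sum_integral_partition t (hg.partition ht.monotone ha hb), ha, hb]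

theorem ofReal_integral_le_forwardLength (hab : a ≤ b) (hg : IntervalIntegrable g volume a b)
    (hD₀ : ∀ s ∈ Icc a b, ∀ u ∈ Icc a b, s ≤ u → 0 ≤ D (γ s) (γ u))
    (hD : ∀ ε > 0, ∃ δ > 0, ∀ s ∈ Icc a b, ∀ u ∈ Icc a b, s ≤ u → u - s ≤ δ →
      ∫ τ in s..u, g τ ≤ D (γ s) (γ u) + ε * (u - s)) :
    ENNReal.ofReal (∫ τ in a..b, g τ) ≤ forwardLength D a b γ := by
  rcases hab.eq_or_lt with rfl | hab
  · simp
  refine ENNReal.le_of_forall_pos_le_add fun ε hε _ => ?_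
  have hba : 0 < b - a := sub_pos.2 hab
  obtain ⟨δ, hδ, hDδ⟩ := hD (ε / (b - a)) (div_pos hε hba)
  obtain ⟨n, t, ht, ha, hb, hmesh⟩ := exists_strictMono_partition_sub_le hab hδ
  have hmem : ∀ j, t j ∈ Icc a b := fun j =>
    ⟨ha ▸ ht.monotone (Fin.zero_le j), hb ▸ ht.monotone (Fin.le_last j)⟩
  have hle : ∀ j : Fin n, t j.castSucc ≤ t j.succ := fun j => (ht j.castSucc_lt_succ).le
  have hlength : ∑ j : Fin n, (t j.succ - t j.castSucc) = b - a := by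
    simpa [ha, hb] using
      sum_integral_partition t (g := fun _ => 1) fun _ _ => intervalIntegrable_const
  have hsum : ∫ τ in a..b, g τ ≤ ∑ j : Fin n, D (γ (t j.castSucc)) (γ (t j.succ)) + ε :=
    calc ∫ τ in a..b, g τ
        = ∑ j : Fin n, ∫ τ in t j.castSucc..t j.succ, g τ := by
          rw [sum_integral_partition t (hg.partition ht.monotone ha hb), ha, hb]
      _ ≤ ∑ j : Fin n, (D (γ (t j.castSucc)) (γ (t j.succ))
            + ε / (b - a) * (t j.succ - t j.castSucc)) :=
          Finset.sum_le_sum fun j _ => hDδ _ (hmem _) _ (hmem _) (hle j) (hmesh j)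
      _ = ∑ j : Fin n, D (γ (t j.castSucc)) (γ (t j.succ)) + ε := by
          rw [Finset.sum_add_distrib, ← Finset.mul_sum, hlength, div_mul_cancel₀ _ hba.ne']
  calc ENNReal.ofReal (∫ τ in a..b, g τ)
      ≤ ENNReal.ofReal (∑ j : Fin n, D (γ (t j.castSucc)) (γ (t j.succ)) + ε) :=
        ENNReal.ofReal_le_ofReal hsum
    _ ≤ ENNReal.ofReal (∑ j : Fin n, D (γ (t j.castSucc)) (γ (t j.succ))) + ENNReal.ofReal ε :=
        ENNReal.ofReal_add_le
    _ = ∑ j : Fin n, ENNReal.ofReal (D (γ (t j.castSucc)) (γ (t j.succ))) + ε := by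
        rw [ENNReal.ofReal_sum_of_nonneg fun j _ => hD₀ _ (hmem _) _ (hmem _) (hle j),
          ENNReal.ofReal_coe_nnreal]
    _ ≤ forwardLength D a b γ + ε := by
        gcongr
        exact le_sSup ⟨n, t, ht, ha, hb, rfl⟩

end ForwardLength

section MaxOfIntegrals

variable {ι : Type*} [Fintype ι] [Nonempty ι]

theorem ContinuousOn.ciSup_apply {α : Type*} [TopologicalSpace α] {F : α → ι → ℝ} {S : Set α}
    (hF : ContinuousOn F S) : ContinuousOn (fun x => ⨆ i, F x i) S := by
  simpa only [Finset.sup'_univ_eq_ciSup] using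
    ContinuousOn.finset_sup'_apply Finset.univ_nonempty fun i _ => continuousOn_pi.1 hF i

theorem ciSup_le_apply_add_of_dist_le {x y : ι → ℝ} {r : ℝ} (hxy : dist x y ≤ r) {i : ι}
    (hi : ∀ k, y k ≤ y i) : ⨆ k, x k ≤ x i + 2 * r := by
  refine ciSup_le fun k => ?_
  have hk := abs_le.1 ((Real.dist_eq _ _).symm.trans_le ((dist_le_pi_dist x y k).trans hxy))
  have hi' := abs_le.1 ((Real.dist_eq _ _).symm.trans_le ((dist_le_pi_dist x y i).trans hxy))
  linarith [hi k]

variable {F : ℝ → ι → ℝ} {s u : ℝ}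

theorem ciSup_integral_le_integral_ciSup (hsu : s ≤ u) (hF : ContinuousOn F (Icc s u)) :
    ⨆ i, ∫ τ in s..u, F τ i ≤ ∫ τ in s..u, ⨆ i, F τ i :=
  ciSup_le fun i => integral_mono_on hsu
    ((continuousOn_pi.1 hF i).intervalIntegrable_of_Icc hsu)
    (hF.ciSup_apply.intervalIntegrable_of_Icc hsu)
    fun _ _ => le_ciSup (Set.finite_range _).bddAbove i

theorem exists_integral_ciSup_le_ciSup_integral_add {a b : ℝ} (hF : ContinuousOn F (Icc a b))
    {ε : ℝ} (hε : 0 < ε) : ∃ δ > 0, ∀ s ∈ Icc a b, ∀ u ∈ Icc a b, s ≤ u → u - s ≤ δ →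
      ∫ τ in s..u, ⨆ i, F τ i ≤ (⨆ i, ∫ τ in s..u, F τ i) + ε * (u - s) := by
  obtain ⟨δ, hδ, hFδ⟩ := Metric.uniformContinuousOn_iff_le.1
    (isCompact_Icc.uniformContinuousOn_of_continuous hF) (ε / 2) (half_pos hε)
  refine ⟨δ, hδ, fun s hs u hu hsu hδsu => ?_⟩
  have hF' : ContinuousOn F (Icc s u) := hF.mono (Icc_subset_Icc hs.1 hu.2)
  obtain ⟨i, hi⟩ := Finite.exists_max (F s)
  have hpoint : ∀ τ ∈ Icc s u, ⨆ k, F τ k ≤ F τ i + ε := by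
    intro τ hτ
    have hdist : dist τ s ≤ δ := by
      rw [Real.dist_eq, abs_of_nonneg (sub_nonneg.2 hτ.1)]
      linarith [hτ.2]
    simpa [mul_div_cancel₀] using ciSup_le_apply_add_of_dist_le
      (hFδ τ (Icc_subset_Icc hs.1 hu.2 hτ) s hs hdist) hi
  have hFi : IntervalIntegrable (fun τ => F τ i) volume s u :=
    (continuousOn_pi.1 hF' i).intervalIntegrable_of_Icc hsu
  calc ∫ τ in s..u, ⨆ k, F τ k
      ≤ ∫ τ in s..u, (F τ i + ε) :=
        integral_mono_on hsu (hF'.ciSup_apply.intervalIntegrable_of_Icc hsu)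
          (hFi.add intervalIntegrable_const) hpoint
    _ = (∫ τ in s..u, F τ i) + ε * (u - s) := by
        rw [integral_add hFi intervalIntegrable_const, intervalIntegral.integral_const, smul_eq_mul,
          mul_comm]
    _ ≤ (⨆ k, ∫ τ in s..u, F τ k) + ε * (u - s) := by
        gcongr
        exact le_ciSup (f := fun k => ∫ τ in s..u, F τ k) (Set.finite_range _).bddAbove i

end MaxOfIntegrals

theorem Df_nonneg {N : ℕ} {f : ℝ → ℝ} {S : Set ℝ} (hf : MonotoneOn f S)
    {P Q : Fin (N + 1) → ℝ} (hP : ∀ i, P i ∈ S) (hQ : ∀ i, Q i ∈ S)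
    (hPQ : ∑ i, P i = ∑ i, Q i) : 0 ≤ Df f P Q := by
  obtain ⟨i, -, hi⟩ := Finset.exists_le_of_sum_le Finset.univ_nonempty hPQ.le
  exact (sub_nonneg.2 (hf (hP i) (hQ i) hi)).trans
    (le_ciSup (f := fun k => f (Q k) - f (P k)) (Set.finite_range _).bddAbove i)

theorem integral_eq_sub_of_hasDerivWithinAt_Icc {φ φ' : ℝ → ℝ} {a b : ℝ} (hab : a ≤ b)
    (hφ : ∀ t ∈ Icc a b, HasDerivWithinAt φ (φ' t) (Icc a b) t)
    (hint : IntervalIntegrable φ' volume a b) : ∫ τ in a..b, φ' τ = φ b - φ a :=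
  integral_eq_sub_of_hasDerivAt_of_le hab (fun t ht => (hφ t ht).continuousWithinAt)
    (fun t ht => (hφ t (Ioo_subset_Icc_self ht)).hasDerivAt (Icc_mem_nhds ht.1 ht.2)) hint

theorem stmt_13_general {N : ℕ} (f f' : ℝ → ℝ)
    (hfm : StrictMonoOn f (Set.Icc 0 1))
    (hderiv : ∀ x ∈ Set.Ioo (0 : ℝ) 1, HasDerivAt f (f' x) x)
    (hf'cont : ContinuousOn f' (Set.Ioo 0 1))
    (a b : ℝ) (hab : a ≤ b)
    (γ γ' : ℝ → Fin (N + 1) → ℝ)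
    (hγmem : ∀ t ∈ Set.Icc a b, memInteriorSimplex (γ t))
    (hγderiv : ∀ t ∈ Set.Icc a b, HasDerivWithinAt γ (γ' t) (Set.Icc a b) t)
    (hγ'cont : ContinuousOn γ' (Set.Icc a b)) :
    forwardLength (Df f) a b γ =
      ENNReal.ofReal (∫ τ in a..b, ⨆ i, f' (γ τ i) * γ' τ i) := by
  have hcoord : ∀ t ∈ Icc a b, ∀ i, γ t i ∈ Ioo 0 1 := fun t ht => (hγmem t ht).1
  have hγ : ContinuousOn γ (Icc a b) := fun t ht => (hγderiv t ht).continuousWithinAt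
  have hF : ContinuousOn (fun τ i => f' (γ τ i) * γ' τ i) (Icc a b) :=
    continuousOn_pi.2 fun i => (hf'cont.comp (continuousOn_pi.1 hγ i) fun t ht => hcoord t ht i).mul
      (continuousOn_pi.1 hγ'cont i)
  have hDf : ∀ s ∈ Icc a b, ∀ u ∈ Icc a b, s ≤ u →
      Df f (γ s) (γ u) = ⨆ i, ∫ τ in s..u, f' (γ τ i) * γ' τ i := by
    intro s hs u hu hsu
    have hsub : Icc s u ⊆ Icc a b := Icc_subset_Icc hs.1 hu.2
    refine iSup_congr fun i => (integral_eq_sub_of_hasDerivWithinAt_Icc (φ := fun τ => f (γ τ i))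
      hsu (fun t ht => ?_) ?_).symm
    · exact ((hderiv _ (hcoord t (hsub ht) i)).comp_hasDerivWithinAt t
        (hasDerivWithinAt_pi.1 (hγderiv t (hsub ht)) i)).mono hsub
    · exact ((continuousOn_pi.1 hF i).mono hsub).intervalIntegrable_of_Icc hsu
  have hD₀ : ∀ s ∈ Icc a b, ∀ u ∈ Icc a b, s ≤ u → 0 ≤ Df f (γ s) (γ u) := fun s hs u hu _ =>
    Df_nonneg (hfm.monotoneOn.mono Ioo_subset_Icc_self) (hcoord s hs) (hcoord u hu)
      ((hγmem s hs).2.trans (hγmem u hu).2.symm)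
  have hg : IntervalIntegrable (fun τ => ⨆ i, f' (γ τ i) * γ' τ i) volume a b :=
    hF.ciSup_apply.intervalIntegrable_of_Icc hab
  refine le_antisymm (forwardLength_le_ofReal_integral hg hD₀ fun s hs u hu hsu => ?_)
    (ofReal_integral_le_forwardLength hab hg hD₀ fun ε hε => ?_)
  · rw [hDf s hs u hu hsu]
    exact ciSup_integral_le_integral_ciSup hsu (hF.mono (Icc_subset_Icc hs.1 hu.2))
  · obtain ⟨δ, hδ, hFδ⟩ := exists_integral_ciSup_le_ciSup_integral_add hF hε
    exact ⟨δ, hδ, fun s hs u hu hsu hδsu => hDf s hs u hu hsu ▸ hFδ s hs u hu hsu hδsu⟩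

/-- the forward length (w.r.t. D_f) of a C¹ curve γ : [a,b] → Δ°_N
equals its Finsler length: L⁺(γ) = ∫_a^b max_i f'(γ_i(τ))·γ_i'(τ) dτ. -/
theorem stmt_13 {N : ℕ} (f f' : ℝ → ℝ)
    (hfc : ContinuousOn f (Set.Icc 0 1))
    (hfm : StrictMonoOn f (Set.Icc 0 1))
    (hf0 : f 0 = 0) (hf1 : f 1 = 1)
    (hderiv : ∀ x ∈ Set.Ioo (0 : ℝ) 1, HasDerivAt f (f' x) x)
    (hf'cont : ContinuousOn f' (Set.Ioo 0 1))
    (a b : ℝ) (hab : a ≤ b)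
    (γ γ' : ℝ → Fin (N + 1) → ℝ)
    (hγmem : ∀ t ∈ Set.Icc a b, memInteriorSimplex (γ t))
    (hγderiv : ∀ t ∈ Set.Icc a b, HasDerivWithinAt γ (γ' t) (Set.Icc a b) t)
    (hγ'cont : ContinuousOn γ' (Set.Icc a b)) :
    forwardLength (Df f) a b γ =
      ENNReal.ofReal (∫ τ in a..b, ⨆ i, f' (γ τ i) * γ' τ i) :=
  stmt_13_general f f' hfm hderiv hf'cont a b hab γ γ' hγmem hγderiv hγ'cont
end

section
/- (Δ_N, D_f) is a geodesic space: for any P, Q ∈ Δ_N with r := D_f(P,Q), there exists a curve γ : [0,r] → Δ_N with γ(0) = P, γ(r) = Q, such that D_f(γ(s),γ(t)) = t − s for all 0 ≤ s ≤ t ≤ r. -/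
open Function
open Finset hiding Icc
open Set

lemma StrictMonoOn.bijOn_Icc {f : ℝ → ℝ} (hfm : StrictMonoOn f (Icc 0 1))
    (hfc : ContinuousOn f (Icc 0 1)) (hf0 : f 0 = 0) (hf1 : f 1 = 1) :
    BijOn f (Icc 0 1) (Icc 0 1) := by
  refine ⟨fun x hx => ?_, hfm.injOn, ?_⟩
  · exact ⟨hf0 ▸ hfm.monotoneOn (left_mem_Icc.2 zero_le_one) hx hx.1,
      hf1 ▸ hfm.monotoneOn hx (right_mem_Icc.2 zero_le_one) hx.2⟩
  · have := intermediate_value_Icc zero_le_one hfc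
    rwa [hf0, hf1] at this

section Df

variable {N : ℕ} {f : ℝ → ℝ} {P Q : Fin (N + 1) → ℝ}

lemma sub_le_Df (f : ℝ → ℝ) (P Q : Fin (N + 1) → ℝ) (i : Fin (N + 1)) :
    f (Q i) - f (P i) ≤ Df f P Q :=
  le_ciSup (f := fun i => f (Q i) - f (P i)) (Finite.bddAbove_range _) i

lemma exists_sub_eq_Df (f : ℝ → ℝ) (P Q : Fin (N + 1) → ℝ) :
    ∃ i, f (Q i) - f (P i) = Df f P Q :=
  exists_eq_ciSup_of_finite

lemma Df_eq_of_forall_le {r : ℝ} (hle : ∀ i, f (Q i) - f (P i) ≤ r) {i₀ : Fin (N + 1)}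
    (heq : f (Q i₀) - f (P i₀) = r) : Df f P Q = r :=
  le_antisymm (ciSup_le hle) (heq ▸ sub_le_Df f P Q i₀)

lemma Df_nonneg_s15 (hfm : MonotoneOn f (Icc 0 1)) (hP : memSimplex P) (hQ : memSimplex Q) :
    0 ≤ Df f P Q := by
  obtain ⟨i, -, hi⟩ := exists_le_of_sum_le univ_nonempty (hP.2.trans hQ.2.symm).le
  exact (sub_nonneg.2 (hfm (hP.1 i) (hQ.1 i) hi)).trans (sub_le_Df f P Q i)

end Df

lemma sum_filter_sub_eq_sum_filter_not_sub {ι M : Type*} [AddCommGroup M] {s : Finset ι}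
    (p : ι → Prop) [DecidablePred p] {P Q : ι → M} (h : ∑ i ∈ s, P i = ∑ i ∈ s, Q i) :
    ∑ i ∈ s with p i, (Q i - P i) = ∑ i ∈ s with ¬p i, (P i - Q i) := by
  rw [← sum_filter_add_sum_filter_not s p P, ← sum_filter_add_sum_filter_not s p Q] at h
  rw [sum_sub_distrib, sum_sub_distrib, sub_eq_sub_iff_add_eq_add,
    add_comm (∑ i ∈ s with ¬p i, P i)]
  exact h.symm

lemma min_add_mem_Icc {a c t : ℝ} (ha : a ∈ Icc (0 : ℝ) 1) (hc : c ∈ Icc (0 : ℝ) 1)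
    (ht : 0 ≤ t) : min (a + t) c ∈ Icc (0 : ℝ) 1 :=
  ⟨le_min (add_nonneg ha.1 ht) hc.1, min_le_of_right_le hc.2⟩

lemma min_add_sub_min_add_le (a c : ℝ) {s t : ℝ} (hst : s ≤ t) :
    min (a + t) c - min (a + s) c ≤ t - s := by
  simp only [min_def]
  split_ifs <;> linarith

noncomputable section

variable {N : ℕ} (f : ℝ → ℝ) (P Q : Fin (N + 1) → ℝ)

def riseCoord (t : ℝ) (i : Fin (N + 1)) : ℝ :=
  invFunOn f (Icc 0 1) (min (f (P i) + t) (f (Q i)))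

def riseExcess (t : ℝ) : ℝ :=
  ∑ i with P i ≤ Q i, (riseCoord f P Q t i - P i)

-- The denominator also equals `∑_{p_i > q_i} (p_i - q_i)`; when it vanishes no coordinate falls,
-- so the junk value `x / 0 = 0` never enters `geodesicPath`.
def fallFraction (t : ℝ) : ℝ :=
  riseExcess f P Q t / ∑ i with P i ≤ Q i, (Q i - P i)

def geodesicPath (t : ℝ) (i : Fin (N + 1)) : ℝ :=
  if P i ≤ Q i then riseCoord f P Q t i else P i - (P i - Q i) * fallFraction f P Q t

variable {f P Q} {s t : ℝ} {i : Fin (N + 1)}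

lemma riseCoord_mem (hbij : BijOn f (Icc 0 1) (Icc 0 1)) (hP : memSimplex P) (hQ : memSimplex Q)
    (ht : 0 ≤ t) (i : Fin (N + 1)) : riseCoord f P Q t i ∈ Icc 0 1 :=
  hbij.surjOn.mapsTo_invFunOn (min_add_mem_Icc (hbij.mapsTo (hP.1 i)) (hbij.mapsTo (hQ.1 i)) ht)

lemma f_riseCoord (hbij : BijOn f (Icc 0 1) (Icc 0 1)) (hP : memSimplex P) (hQ : memSimplex Q)
    (ht : 0 ≤ t) (i : Fin (N + 1)) :
    f (riseCoord f P Q t i) = min (f (P i) + t) (f (Q i)) :=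
  hbij.surjOn.rightInvOn_invFunOn
    (min_add_mem_Icc (hbij.mapsTo (hP.1 i)) (hbij.mapsTo (hQ.1 i)) ht)

lemma riseCoord_mono (hfm : StrictMonoOn f (Icc 0 1)) (hbij : BijOn f (Icc 0 1) (Icc 0 1))
    (hP : memSimplex P) (hQ : memSimplex Q) (hs : 0 ≤ s) (hst : s ≤ t) (i : Fin (N + 1)) :
    riseCoord f P Q s i ≤ riseCoord f P Q t i := by
  have ht := hs.trans hst
  rw [← hfm.le_iff_le (riseCoord_mem hbij hP hQ hs i) (riseCoord_mem hbij hP hQ ht i),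
    f_riseCoord hbij hP hQ hs, f_riseCoord hbij hP hQ ht]
  exact min_le_min_right _ (by linarith)

lemma riseCoord_le (hfm : StrictMonoOn f (Icc 0 1)) (hbij : BijOn f (Icc 0 1) (Icc 0 1))
    (hP : memSimplex P) (hQ : memSimplex Q) (ht : 0 ≤ t) (i : Fin (N + 1)) :
    riseCoord f P Q t i ≤ Q i := by
  rw [← hfm.le_iff_le (riseCoord_mem hbij hP hQ ht i) (hQ.1 i), f_riseCoord hbij hP hQ ht]
  exact min_le_right _ _

lemma riseCoord_zero (hfm : StrictMonoOn f (Icc 0 1)) (hbij : BijOn f (Icc 0 1) (Icc 0 1))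
    (hP : memSimplex P) (hQ : memSimplex Q) (hPQ : P i ≤ Q i) : riseCoord f P Q 0 i = P i := by
  refine hfm.injOn (riseCoord_mem hbij hP hQ le_rfl i) (hP.1 i) ?_
  rw [f_riseCoord hbij hP hQ le_rfl, add_zero,
    min_eq_left (hfm.monotoneOn (hP.1 i) (hQ.1 i) hPQ)]

lemma riseCoord_of_sub_le (hbij : BijOn f (Icc 0 1) (Icc 0 1)) (hP : memSimplex P)
    (hQ : memSimplex Q) (ht : 0 ≤ t) (hQt : f (Q i) - f (P i) ≤ t) :
    riseCoord f P Q t i = Q i := by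
  refine hbij.injOn (riseCoord_mem hbij hP hQ ht i) (hQ.1 i) ?_
  rw [f_riseCoord hbij hP hQ ht, min_eq_right (by linarith)]

lemma riseExcess_zero (hfm : StrictMonoOn f (Icc 0 1)) (hbij : BijOn f (Icc 0 1) (Icc 0 1))
    (hP : memSimplex P) (hQ : memSimplex Q) :
    riseExcess f P Q 0 = 0 :=
  sum_eq_zero fun i hi => by
    rw [riseCoord_zero hfm hbij hP hQ (mem_filter.1 hi).2, sub_self]

lemma riseExcess_mono (hfm : StrictMonoOn f (Icc 0 1)) (hbij : BijOn f (Icc 0 1) (Icc 0 1))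
    (hP : memSimplex P) (hQ : memSimplex Q) (hs : 0 ≤ s) (hst : s ≤ t) :
    riseExcess f P Q s ≤ riseExcess f P Q t :=
  sum_le_sum fun i _ => sub_le_sub_right (riseCoord_mono hfm hbij hP hQ hs hst i) _

lemma riseExcess_nonneg (hfm : StrictMonoOn f (Icc 0 1)) (hbij : BijOn f (Icc 0 1) (Icc 0 1))
    (hP : memSimplex P) (hQ : memSimplex Q) (ht : 0 ≤ t) : 0 ≤ riseExcess f P Q t :=
  riseExcess_zero hfm hbij hP hQ ▸ riseExcess_mono hfm hbij hP hQ le_rfl ht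

lemma riseExcess_le (hfm : StrictMonoOn f (Icc 0 1)) (hbij : BijOn f (Icc 0 1) (Icc 0 1))
    (hP : memSimplex P) (hQ : memSimplex Q) (ht : 0 ≤ t) :
    riseExcess f P Q t ≤ ∑ i with P i ≤ Q i, (Q i - P i) :=
  sum_le_sum fun i _ => sub_le_sub_right (riseCoord_le hfm hbij hP hQ ht i) _

lemma riseExcess_Df (hfm : StrictMonoOn f (Icc 0 1)) (hbij : BijOn f (Icc 0 1) (Icc 0 1))
    (hP : memSimplex P) (hQ : memSimplex Q) :
    riseExcess f P Q (Df f P Q) = ∑ i with P i ≤ Q i, (Q i - P i) :=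
  sum_congr rfl fun i _ => by
    rw [riseCoord_of_sub_le hbij hP hQ (Df_nonneg_s15 hfm.monotoneOn hP hQ) (sub_le_Df f P Q i)]

lemma fallFraction_zero (hfm : StrictMonoOn f (Icc 0 1)) (hbij : BijOn f (Icc 0 1) (Icc 0 1))
    (hP : memSimplex P) (hQ : memSimplex Q) :
    fallFraction f P Q 0 = 0 := by
  rw [fallFraction, riseExcess_zero hfm hbij hP hQ, zero_div]

lemma fallFraction_mono (hfm : StrictMonoOn f (Icc 0 1)) (hbij : BijOn f (Icc 0 1) (Icc 0 1))
    (hP : memSimplex P) (hQ : memSimplex Q) (hs : 0 ≤ s) (hst : s ≤ t) :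
    fallFraction f P Q s ≤ fallFraction f P Q t :=
  div_le_div_of_nonneg_right (riseExcess_mono hfm hbij hP hQ hs hst)
    ((riseExcess_nonneg hfm hbij hP hQ hs).trans (riseExcess_le hfm hbij hP hQ hs))

lemma fallFraction_mem (hfm : StrictMonoOn f (Icc 0 1)) (hbij : BijOn f (Icc 0 1) (Icc 0 1))
    (hP : memSimplex P) (hQ : memSimplex Q) (ht : 0 ≤ t) : fallFraction f P Q t ∈ Icc 0 1 := by
  have hle := riseExcess_le hfm hbij hP hQ ht
  have hnonneg := riseExcess_nonneg hfm hbij hP hQ ht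
  exact ⟨div_nonneg hnonneg (hnonneg.trans hle), div_le_one_of_le₀ hle (hnonneg.trans hle)⟩

lemma fallFraction_mul (hfm : StrictMonoOn f (Icc 0 1)) (hbij : BijOn f (Icc 0 1) (Icc 0 1))
    (hP : memSimplex P) (hQ : memSimplex Q) (ht : 0 ≤ t) :
    fallFraction f P Q t * ∑ i with P i ≤ Q i, (Q i - P i) = riseExcess f P Q t := by
  rcases eq_or_ne (∑ i with P i ≤ Q i, (Q i - P i)) 0 with h | h
  · rw [h, mul_zero]
    exact (le_antisymm (h ▸ riseExcess_le hfm hbij hP hQ ht)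
      (riseExcess_nonneg hfm hbij hP hQ ht)).symm
  · exact div_mul_cancel₀ _ h

lemma fallFraction_Df (hfm : StrictMonoOn f (Icc 0 1)) (hbij : BijOn f (Icc 0 1) (Icc 0 1))
    (hP : memSimplex P) (hQ : memSimplex Q) (h : ∑ i with P i ≤ Q i, (Q i - P i) ≠ 0) :
    fallFraction f P Q (Df f P Q) = 1 := by
  rw [fallFraction, riseExcess_Df hfm hbij hP hQ, div_self h]

lemma geodesicPath_zero (hfm : StrictMonoOn f (Icc 0 1)) (hbij : BijOn f (Icc 0 1) (Icc 0 1))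
    (hP : memSimplex P) (hQ : memSimplex Q) :
    geodesicPath f P Q 0 = P := by
  funext i
  unfold geodesicPath
  split_ifs with hPQ
  · exact riseCoord_zero hfm hbij hP hQ hPQ
  · rw [fallFraction_zero hfm hbij hP hQ, mul_zero, sub_zero]

lemma geodesicPath_Df (hfm : StrictMonoOn f (Icc 0 1)) (hbij : BijOn f (Icc 0 1) (Icc 0 1))
    (hP : memSimplex P) (hQ : memSimplex Q) :
    geodesicPath f P Q (Df f P Q) = Q := by
  funext i
  unfold geodesicPath
  split_ifs with hPQ
  · exact riseCoord_of_sub_le hbij hP hQ (Df_nonneg_s15 hfm.monotoneOn hP hQ) (sub_le_Df f P Q i)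
  · have hfall : 0 < ∑ j with P j ≤ Q j, (Q j - P j) := by
      rw [sum_filter_sub_eq_sum_filter_not_sub _ (hP.2.trans hQ.2.symm)]
      exact (sub_pos.2 (not_le.1 hPQ)).trans_le <|
        single_le_sum (fun j hj => sub_nonneg.2 (not_le.1 (mem_filter.1 hj).2).le)
          (mem_filter.2 ⟨mem_univ i, hPQ⟩)
    rw [fallFraction_Df hfm hbij hP hQ hfall.ne', mul_one, sub_sub_cancel]

lemma geodesicPath_mem (hfm : StrictMonoOn f (Icc 0 1)) (hbij : BijOn f (Icc 0 1) (Icc 0 1))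
    (hP : memSimplex P) (hQ : memSimplex Q) (ht : 0 ≤ t) (i : Fin (N + 1)) :
    geodesicPath f P Q t i ∈ Icc 0 1 := by
  unfold geodesicPath
  split_ifs with hPQ
  · exact riseCoord_mem hbij hP hQ ht i
  · obtain ⟨hl0, hl1⟩ := fallFraction_mem hfm hbij hP hQ ht
    obtain ⟨hP0, hP1⟩ := hP.1 i
    obtain ⟨hQ0, hQ1⟩ := hQ.1 i
    constructor <;> nlinarith

lemma sum_geodesicPath (hfm : StrictMonoOn f (Icc 0 1)) (hbij : BijOn f (Icc 0 1) (Icc 0 1))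
    (hP : memSimplex P) (hQ : memSimplex Q) (ht : 0 ≤ t) : ∑ i, geodesicPath f P Q t i = 1 := by
  have hmass : ∑ i with P i ≤ Q i, P i + ∑ i with ¬P i ≤ Q i, P i = 1 :=
    (sum_filter_add_sum_filter_not _ _ _).trans hP.2
  have hexcess := fallFraction_mul hfm hbij hP hQ ht
  rw [sum_filter_sub_eq_sum_filter_not_sub _ (hP.2.trans hQ.2.symm)] at hexcess
  simp only [geodesicPath, sum_ite, sum_sub_distrib, ← sum_mul, riseExcess] at hexcess ⊢
  linarith

lemma memSimplex_geodesicPath (hfm : StrictMonoOn f (Icc 0 1)) (hbij : BijOn f (Icc 0 1) (Icc 0 1))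
    (hP : memSimplex P) (hQ : memSimplex Q) (ht : 0 ≤ t) : memSimplex (geodesicPath f P Q t) :=
  ⟨geodesicPath_mem hfm hbij hP hQ ht, sum_geodesicPath hfm hbij hP hQ ht⟩

lemma f_geodesicPath_sub_le (hfm : StrictMonoOn f (Icc 0 1)) (hbij : BijOn f (Icc 0 1) (Icc 0 1))
    (hP : memSimplex P) (hQ : memSimplex Q) (hs : 0 ≤ s) (hst : s ≤ t) (i : Fin (N + 1)) :
    f (geodesicPath f P Q t i) - f (geodesicPath f P Q s i) ≤ t - s := by
  have ht := hs.trans hst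
  by_cases hPQ : P i ≤ Q i
  · simp only [geodesicPath, if_pos hPQ, f_riseCoord hbij hP hQ ht, f_riseCoord hbij hP hQ hs]
    exact min_add_sub_min_add_le _ _ hst
  · have hdecr : geodesicPath f P Q t i ≤ geodesicPath f P Q s i := by
      simp only [geodesicPath, if_neg hPQ]
      exact sub_le_sub_left (mul_le_mul_of_nonneg_left (fallFraction_mono hfm hbij hP hQ hs hst)
        (sub_nonneg.2 (not_le.1 hPQ).le)) _
    have := hfm.monotoneOn (geodesicPath_mem hfm hbij hP hQ ht i)
      (geodesicPath_mem hfm hbij hP hQ hs i) hdecr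
    linarith

lemma f_geodesicPath_sub_eq (hbij : BijOn f (Icc 0 1) (Icc 0 1)) (hP : memSimplex P)
    (hQ : memSimplex Q) (hPQ : P i ≤ Q i) (hs : 0 ≤ s) (hst : s ≤ t)
    (htQ : t ≤ f (Q i) - f (P i)) :
    f (geodesicPath f P Q t i) - f (geodesicPath f P Q s i) = t - s := by
  have ht := hs.trans hst
  simp only [geodesicPath, if_pos hPQ, f_riseCoord hbij hP hQ ht, f_riseCoord hbij hP hQ hs]
  rw [min_eq_left (by linarith), min_eq_left (by linarith)]
  ring

end

/-- (Δ_N, D_f) is a geodesic space: any P,Q ∈ Δ_N are joined by a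
forward geodesic γ : [0,r] → Δ_N, r = D_f(P,Q), with D_f(γ(s),γ(t)) = t - s. -/
theorem stmt_15 {N : ℕ} (f : ℝ → ℝ)
    (hfc : ContinuousOn f (Set.Icc 0 1))
    (hfm : StrictMonoOn f (Set.Icc 0 1))
    (hf0 : f 0 = 0) (hf1 : f 1 = 1)
    (P Q : Fin (N + 1) → ℝ) (hP : memSimplex P) (hQ : memSimplex Q) :
    ∃ γ : ℝ → Fin (N + 1) → ℝ,
      γ 0 = P ∧ γ (Df f P Q) = Q ∧
      (∀ t ∈ Set.Icc (0 : ℝ) (Df f P Q), memSimplex (γ t)) ∧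
      (∀ s t : ℝ, 0 ≤ s → s ≤ t → t ≤ Df f P Q → Df f (γ s) (γ t) = t - s) := by
  have hbij := hfm.bijOn_Icc hfc hf0 hf1
  obtain ⟨i₀, hi₀⟩ := exists_sub_eq_Df f P Q
  have hPQ₀ : P i₀ ≤ Q i₀ := (hfm.le_iff_le (hP.1 i₀) (hQ.1 i₀)).1 <|
    sub_nonneg.1 (hi₀ ▸ Df_nonneg_s15 hfm.monotoneOn hP hQ)
  refine ⟨geodesicPath f P Q, geodesicPath_zero hfm hbij hP hQ, geodesicPath_Df hfm hbij hP hQ,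
    fun t ht => memSimplex_geodesicPath hfm hbij hP hQ ht.1, fun s t hs hst htD => ?_⟩
  exact Df_eq_of_forall_le (f_geodesicPath_sub_le hfm hbij hP hQ hs hst)
    (f_geodesicPath_sub_eq hbij hP hQ hPQ₀ hs hst (hi₀ ▸ htD))
end
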